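/- Let y ∈ ℝ^{n+1} have its centered fractional parts sorted in descending order: {y_1} ≥ {y_2} ≥ … ≥ {y_{n+1}}. Then there exists m ∈ {0, 1, …, n} such that Q(⌊y⌉ + Σ_{i=1}^{m} e_i) is a closest point in A_n* to y, where e_i denotes the i-th standard basis vector of ℝ^{n+1}. -/

import Mathlib

/-- The orthogonal projection onto the hyperplane orthogonal to the all-ones
vector: `(Q x) i = x i - (∑ j, x j) / (n+1)`. -/
noncomputable def Q {n : ℕ} (x : EuclideanSpace ℝ (Fin (n+1))) :
    EuclideanSpace ℝ (Fin (n+1)) :=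
  WithLp.toLp 2 (fun i => x i - (∑ j, x j) / (n+1))

/-- Componentwise nearest-integer rounding of a vector (viewed in `ℝ^{n+1}`). -/
noncomputable def roundVec {n : ℕ} (y : EuclideanSpace ℝ (Fin (n+1))) :
    EuclideanSpace ℝ (Fin (n+1)) :=
  WithLp.toLp 2 (fun i => (round (y i) : ℝ))

/-- The centered fractional part `{t} = t - ⌊t⌉ ∈ [-1/2, 1/2)`. -/
noncomputable def fract (t : ℝ) : ℝ := t - round t

/-- `∑_{i=1}^{m} e_i`: the sum of the first `m` standard basis vectors of `ℝ^{n+1}`. -/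
noncomputable def basisSum (n : ℕ) (m : ℕ) : EuclideanSpace ℝ (Fin (n+1)) :=
  ∑ i ∈ Finset.univ.filter (fun i : Fin (n+1) => (i : ℕ) < m),
    EuclideanSpace.single i (1 : ℝ)

/-- The lattice `A_n*`: the image under `Q` of the integer vectors in `ℝ^{n+1}`. -/
noncomputable def Anstar (n : ℕ) : Set (EuclideanSpace ℝ (Fin (n+1))) :=
  { x | ∃ k : Fin (n+1) → ℤ, x = Q (WithLp.toLp 2 (fun i => (k i : ℝ))) }

/-!
Write `y = ⌊y⌉ + z` with `z = {y}`. Since `Q` kills the all-ones direction, every point of `A_n*`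
is `Q (⌊y⌉ + u)` for an integer vector `u` with `∑ u = m ∈ {0, …, n}`, and for fixed `∑ u` the
distance from `y` to `Q (⌊y⌉ + u)` is an increasing function of `∑ (z i - u i)²`. When `z` is sorted,
the vector `e` with `m` leading ones minimises this sum: for `θ = z_{m-1}` (`θ = 1/2` if `m = 0`) every
`z i - e i` lies in `[θ - 1, θ]`, and then `(z i - e i)² + (1 - 2θ) (u i - e i) ≤ (z i - u i)²`
termwise, the multiplier terms summing to zero. It remains to minimise over `m`.
-/

open Finset

lemma int_mul_add_nonneg (u : ℤ) {s : ℝ} (hs : |s| ≤ 1) : 0 ≤ (u : ℝ) * (u + s) := by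
  obtain ⟨hs₁, hs₂⟩ := abs_le.1 hs
  rcases le_or_gt u 0 with hu | hu
  · rcases hu.lt_or_eq with hu | rfl
    · have : (u : ℝ) ≤ -1 := by exact_mod_cast Int.le_sub_one_of_lt hu
      nlinarith
    · simp
  · have : (1 : ℝ) ≤ u := by exact_mod_cast hu
    nlinarith

lemma sq_add_mul_le_sq_sub_int {z θ : ℝ} (h₁ : θ - 1 ≤ z) (h₂ : z ≤ θ) (u : ℤ) :
    z ^ 2 + (1 - 2 * θ) * u ≤ (z - u) ^ 2 := by
  have := int_mul_add_nonneg u (s := 2 * (θ - z) - 1) (abs_le.2 ⟨by linarith, by linarith⟩)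
  nlinarith

theorem sum_sq_sub_le_of_sub_mem_Icc {ι : Type*} [Fintype ι] {z : ι → ℝ} {e u : ι → ℤ} {θ : ℝ}
    (he : ∀ i, z i - e i ∈ Set.Icc (θ - 1) θ) (hu : ∑ i, u i = ∑ i, e i) :
    ∑ i, (z i - e i) ^ 2 ≤ ∑ i, (z i - u i) ^ 2 := by
  have hu' : ∑ i, ((u i : ℝ) - e i) = 0 := by
    rw [sum_sub_distrib, sub_eq_zero]; exact_mod_cast hu
  calc ∑ i, (z i - e i) ^ 2
      = ∑ i, ((z i - e i) ^ 2 + (1 - 2 * θ) * ((u i - e i : ℤ) : ℝ)) := by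
        push_cast; rw [sum_add_distrib, ← mul_sum, hu', mul_zero, add_zero]
    _ ≤ ∑ i, (z i - e i - ((u i - e i : ℤ) : ℝ)) ^ 2 :=
        sum_le_sum fun i _ ↦ sq_add_mul_le_sq_sub_int (he i).1 (he i).2 _
    _ = ∑ i, (z i - u i) ^ 2 := by push_cast; ring_nf

lemma exists_sub_indicator_mem_Icc {N : ℕ} {z : Fin N → ℝ} (hz : Antitone z)
    (hb : ∀ i, |z i| ≤ 1 / 2) {m : ℕ} (hm : m ≤ N) :
    ∃ θ, ∀ i, z i - ((if (i : ℕ) < m then 1 else 0 : ℤ) : ℝ) ∈ Set.Icc (θ - 1) θ := by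
  rcases Nat.eq_zero_or_pos m with rfl | hm₀
  · refine ⟨1 / 2, fun i ↦ ?_⟩
    have := abs_le.1 (hb i)
    simp only [Nat.not_lt_zero, if_false, Int.cast_zero, sub_zero, Set.mem_Icc]
    constructor <;> linarith
  · refine ⟨z ⟨m - 1, by omega⟩, fun i ↦ ?_⟩
    have hi := abs_le.1 (hb i)
    have hl := abs_le.1 (hb ⟨m - 1, by omega⟩)
    by_cases h : (i : ℕ) < m
    · have := hz (show i ≤ ⟨m - 1, by omega⟩ from Fin.le_def.2 (by simp; omega))
      simp only [h, if_true, Int.cast_one, Set.mem_Icc]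
      constructor <;> linarith
    · have := hz (show (⟨m - 1, by omega⟩ : Fin N) ≤ i from Fin.le_def.2 (by simp; omega))
      simp only [h, if_false, Int.cast_zero, sub_zero, Set.mem_Icc]
      constructor <;> linarith

lemma sum_ite_val_lt {N m : ℕ} (hm : m ≤ N) :
    ∑ i : Fin N, (if (i : ℕ) < m then 1 else 0 : ℤ) = m := by
  rw [sum_boole, Fin.card_filter_val_lt, min_eq_right hm]

lemma Q_add_const {n : ℕ} (v : Fin (n + 1) → ℝ) (c : ℝ) :
    Q (WithLp.toLp 2 (fun i ↦ v i + c)) = Q (WithLp.toLp 2 v) := by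
  ext i
  simp only [Q, sum_add_distrib, sum_const, card_univ, Fintype.card_fin, nsmul_eq_mul]
  field_simp
  push_cast
  ring

lemma norm_sub_Q_sq {n : ℕ} (y : EuclideanSpace ℝ (Fin (n + 1))) (v : Fin (n + 1) → ℝ) :
    ‖y - Q (WithLp.toLp 2 v)‖ ^ 2 = ∑ i, (y i - v i) ^ 2 - (∑ i, (y i - v i)) ^ 2 / (n + 1)
      + (∑ i, y i) ^ 2 / (n + 1) := by
  set s := (∑ j, v j) / (n + 1)
  have hs : ∑ j, v j = ∑ j, y j - ∑ j, (y j - v j) := by rw [sum_sub_distrib]; ring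
  have hcoord : ∀ i, (y - Q (WithLp.toLp 2 v)) i = (y i - v i) + s := fun i ↦ by
    simp [Q, s]; ring
  rw [EuclideanSpace.norm_eq, Real.sq_sqrt (by positivity)]
  simp only [Real.norm_eq_abs, sq_abs, hcoord, add_sq, sum_add_distrib, ← sum_mul, ← mul_sum,
    sum_const, card_univ, Fintype.card_fin, nsmul_eq_mul]
  simp only [s, hs]
  field_simp
  push_cast
  ring

lemma norm_sub_Q_le_of_sum_eq {n : ℕ} (y : EuclideanSpace ℝ (Fin (n + 1))) {v w : Fin (n + 1) → ℝ}
    (hsum : ∑ i, v i = ∑ i, w i) (hle : ∑ i, (y i - v i) ^ 2 ≤ ∑ i, (y i - w i) ^ 2) :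
    ‖y - Q (WithLp.toLp 2 v)‖ ≤ ‖y - Q (WithLp.toLp 2 w)‖ := by
  have hsum' : ∑ i, (y i - v i) = ∑ i, (y i - w i) := by simp only [sum_sub_distrib, hsum]
  rw [← sq_le_sq₀ (norm_nonneg _) (norm_nonneg _), norm_sub_Q_sq, norm_sub_Q_sq, hsum']
  gcongr


lemma roundVec_add_basisSum {n : ℕ} (y : EuclideanSpace ℝ (Fin (n + 1))) (m : ℕ) :
    roundVec y + basisSum n m =
      WithLp.toLp 2 (fun i ↦ ((round (y i) + if (i : ℕ) < m then 1 else 0 : ℤ) : ℝ)) := by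
  ext i
  simp [roundVec, basisSum]

lemma exists_sum_sub_const_eq {n : ℕ} (t : Fin (n + 1) → ℤ) :
    ∃ c : ℤ, ∃ m ≤ n, ∑ i, (t i - c) = m := by
  refine ⟨(∑ i, t i) / (n + 1), ((∑ i, t i) % (n + 1)).toNat, ?_, ?_⟩
  · have := Int.emod_lt_of_pos (∑ i, t i) (by omega : (0 : ℤ) < n + 1)
    omega
  · have := Int.emod_nonneg (∑ i, t i) (by omega : (n : ℤ) + 1 ≠ 0)
    have := Int.mul_ediv_add_emod (∑ i, t i) (n + 1)
    simp only [sum_sub_distrib, sum_const, card_univ, Fintype.card_fin, nsmul_eq_mul]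
    push_cast
    omega

lemma norm_sub_Q_roundVec_add_basisSum_le {n m : ℕ} {y : EuclideanSpace ℝ (Fin (n + 1))}
    (hsort : Antitone fun i ↦ fract (y i)) (hm : m ≤ n + 1) {u : Fin (n + 1) → ℤ}
    (hu : ∑ i, u i = m) :
    ‖y - Q (roundVec y + basisSum n m)‖ ≤
      ‖y - Q (WithLp.toLp 2 (fun i ↦ ((round (y i) + u i : ℤ) : ℝ)))‖ := by
  obtain ⟨θ, hθ⟩ := exists_sub_indicator_mem_Icc hsort (fun i ↦ abs_sub_round (y i)) hm
  have hsum := sum_ite_val_lt (N := n + 1) hm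
  have hfract : ∀ (a : ℤ) i, y i - ((round (y i) + a : ℤ) : ℝ) = fract (y i) - a := by
    intro a i; push_cast; unfold fract; ring
  rw [roundVec_add_basisSum]
  apply norm_sub_Q_le_of_sum_eq
  · simp only [Int.cast_add, sum_add_distrib, ← Int.cast_sum, hsum, hu]
  · simp only [hfract]
    exact sum_sq_sub_le_of_sub_mem_Icc hθ (hu.trans hsum.symm)

/-- If the centered fractional parts of `y` are sorted in descending order, then
there exists `m ∈ {0,…,n}` such that `Q(⌊y⌉ + ∑_{i=1}^{m} e_i)` is a closest
point in `A_n*` to `y`. -/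
theorem exists_m_closest (n : ℕ) (y : EuclideanSpace ℝ (Fin (n+1)))
    (hsort : ∀ i j : Fin (n+1), i ≤ j → fract (y j) ≤ fract (y i)) :
    ∃ m ≤ n, Q (roundVec y + basisSum n m) ∈ Anstar n ∧
      ∀ w ∈ Anstar n, ‖y - Q (roundVec y + basisSum n m)‖ ≤ ‖y - w‖ := by
  obtain ⟨m, hm, hmin⟩ := (range (n + 1)).exists_min_image
    (fun m ↦ ‖y - Q (roundVec y + basisSum n m)‖) ⟨0, by simp⟩
  refine ⟨m, by simpa [Nat.lt_succ_iff] using hm, ⟨_, congrArg Q (roundVec_add_basisSum y m)⟩, ?_⟩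
  rintro _ ⟨k, rfl⟩
  obtain ⟨c, m', hm', hsum⟩ := exists_sum_sub_const_eq fun i ↦ k i - round (y i)
  calc ‖y - Q (roundVec y + basisSum n m)‖
      ≤ ‖y - Q (roundVec y + basisSum n m')‖ := hmin m' (by simp; omega)
    _ ≤ ‖y - Q (WithLp.toLp 2 fun i ↦ ((round (y i) + (k i - round (y i) - c) : ℤ) : ℝ))‖ :=
        norm_sub_Q_roundVec_add_basisSum_le hsort (by omega) hsum
    _ = ‖y - Q (WithLp.toLp 2 fun i ↦ (k i : ℝ))‖ := by
        rw [← Q_add_const _ (c : ℝ)]; push_cast; ring_nf
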